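/- arXiv:1103.5361 — 2 statements merged into one kernel-verified Lean document; each statement's English description precedes it below -/
import Mathlib

section
/- Let Λ be a ring, e an idempotent of Λ, and P a finitely generated projective right Λ-module such that e annihilates P/PJ (where J is the Jacobson radical), with P a direct sum of modules e_iΛ for primitive idempotents e_i orthogonal to e. Then for any Λ-linear endomorphism φ of P, the image of tr(φ) under the map HH₀(Λ) → HH₀(Λ/Λ(1−e)Λ) induced by the quotient homomorphism is zero. -/
/-- The commutator subgroup [R,R]: additive subgroup generated by ab - ba. -/
def commSub (R : Type*) [Ring R] : AddSubgroup R :=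
  AddSubgroup.closure {x | ∃ a b : R, x = a * b - b * a}

/-- The zeroth Hochschild homology HH₀(R) = R/[R,R]. -/
abbrev HH0 (R : Type*) [Ring R] := R ⧸ commSub R

/-- Class of an element of R in HH₀(R). -/
def HH0.mk {R : Type*} [Ring R] (a : R) : HH0 R := QuotientAddGroup.mk a

/-- The group homomorphism HH₀(R) → HH₀(S) induced by a ring homomorphism. -/
def HH0.map {R S : Type*} [Ring R] [Ring S] (f : R →+* S) : HH0 R →+ HH0 S :=
  QuotientAddGroup.map _ _ f.toAddMonoidHom (by
    refine (AddSubgroup.closure_le _).mpr ?_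
    rintro x ⟨a, b, rfl⟩
    simp only [AddSubgroup.coe_comap, Set.mem_preimage, RingHom.toAddMonoidHom_eq_coe,
      AddMonoidHom.coe_coe, map_sub, map_mul, SetLike.mem_coe]
    exact AddSubgroup.subset_closure ⟨f a, f b, rfl⟩)

/-- The quotient ring Λ_e = Λ/Λ(1-e)Λ. -/
abbrev corner (Λ : Type*) [Ring Λ] (e : Λ) :=
  (TwoSidedIdeal.span {1 - e}).ringCon.Quotient

/-- The canonical projection Λ → Λ_e. -/
abbrev cornerProj (Λ : Type*) [Ring Λ] (e : Λ) : Λ →+* corner Λ e :=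
  (TwoSidedIdeal.span {1 - e}).ringCon.mk'

/-- The right Λ-module e₁Λ ⊕ ⋯ ⊕ e_rΛ, realized as a Λᵐᵒᵖ-submodule of Λʳ. -/
def stdProj {Λ : Type*} [Ring Λ] {r : ℕ} (e : Fin r → Λ) : Submodule Λᵐᵒᵖ (Fin r → Λ) where
  carrier := {x | ∀ j, e j * x j = x j}
  add_mem' := by
    intro x y hx hy j
    simp only [Pi.add_apply, mul_add, hx j, hy j]
  zero_mem' := by intro j; simp
  smul_mem' := by
    intro c x hx j
    simp only [Pi.smul_apply, MulOpposite.smul_eq_mul_unop, ← mul_assoc, hx j]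

/-- The canonical generator of the j-th summand e_jΛ of e₁Λ ⊕ ⋯ ⊕ e_rΛ. -/
def stdBasis {Λ : Type*} [Ring Λ] {r : ℕ} (e : Fin r → Λ)
    (he : ∀ j, IsIdempotentElem (e j)) (j : Fin r) : stdProj e :=
  ⟨fun i => if i = j then e j else 0, by
    intro i
    by_cases h : i = j
    · subst h; simp; exact he i
    · simp [h]⟩

/-- The Hattori–Stallings trace of an endomorphism of P = e₁Λ ⊕ ⋯ ⊕ e_rΛ :
the class in HH₀(Λ) of the sum of the diagonal entries of its representing matrix. -/
def trP {Λ : Type*} [Ring Λ] {r : ℕ} {e : Fin r → Λ} (he : ∀ j, IsIdempotentElem (e j))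
    (φ : stdProj e →ₗ[Λᵐᵒᵖ] stdProj e) : HH0 Λ :=
  HH0.mk (∑ j, (φ (stdBasis e he j) : Fin r → Λ) j)

/-- An idempotent u is primitive if it is nonzero and is not the sum of two orthogonal
nonzero idempotents. -/
def IsPrimitiveIdem {Λ : Type*} [Ring Λ] (u : Λ) : Prop :=
  u ≠ 0 ∧ IsIdempotentElem u ∧ ∀ f g : Λ, IsIdempotentElem f → IsIdempotentElem g →
    f * g = 0 → g * f = 0 → f + g = u → f = 0 ∨ g = 0

/-- Lemma 1.2: if e is an idempotent of Λ and P = e₁Λ ⊕ ⋯ ⊕ e_rΛ is a finitely generated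
projective right Λ-module whose top is annihilated by e — the e_i being primitive
idempotents orthogonal to e (so that 1 - e = e₁ + ⋯ + e_r for a suitable completion) —
then for every Λ-linear endomorphism φ of P the image of tr(φ) in HH₀(Λ_e) vanishes,
where Λ_e = Λ/Λ(1-e)Λ. -/
theorem etrace_of_annihilated_top (Λ : Type*) [Ring Λ] (e : Λ) (hee : IsIdempotentElem e)
    (r : ℕ) (eP : Fin r → Λ) (hprim : ∀ i, IsPrimitiveIdem (eP i))
    (he : ∀ i, IsIdempotentElem (eP i))
    (horth : ∀ i j, i ≠ j → eP i * eP j = 0)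
    (hoe : ∀ i, e * eP i = 0 ∧ eP i * e = 0)
    (hsum : (∑ i, eP i) = 1 - e)
    (φ : stdProj eP →ₗ[Λᵐᵒᵖ] stdProj eP) :
    HH0.map (cornerProj Λ e) (trP he φ) = 0 := by
  have hmem : (∑ j, (φ (stdBasis eP he j) : Fin r → Λ) j) ∈ TwoSidedIdeal.span {1 - e} := by
    refine sum_mem (fun j _ => ?_)
    have hfix : eP j * (φ (stdBasis eP he j) : Fin r → Λ) j
        = (φ (stdBasis eP he j) : Fin r → Λ) j := (φ (stdBasis eP he j)).2 j
    have h1 : eP j * (1 - e) = eP j := by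
      rw [mul_sub, mul_one, (hoe j).2, sub_zero]
    have : (φ (stdBasis eP he j) : Fin r → Λ) j
        = eP j * (1 - e) * (φ (stdBasis eP he j) : Fin r → Λ) j := by
      rw [h1, hfix]
    rw [this, mul_assoc]
    exact TwoSidedIdeal.mul_mem_left _ _ _
      (TwoSidedIdeal.mul_mem_right _ _ _ (TwoSidedIdeal.subset_span rfl))
  have hzero : cornerProj Λ e (∑ j, (φ (stdBasis eP he j) : Fin r → Λ) j) = 0 := by
    have := (TwoSidedIdeal.mem_iff _ _).mp hmem
    exact (RingCon.eq _).mpr this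
  show HH0.map (cornerProj Λ e) (HH0.mk _) = 0
  have : HH0.map (cornerProj Λ e) (HH0.mk (∑ j, (φ (stdBasis eP he j) : Fin r → Λ) j))
      = HH0.mk (cornerProj Λ e (∑ j, (φ (stdBasis eP he j) : Fin r → Λ) j)) := rfl
  rw [this, hzero]
  exact map_zero (QuotientAddGroup.mk' _)
end

section
/- Let Λ be an artin algebra, e an idempotent of Λ, and M a finitely generated right Λ-module with an e-bounded projective resolution. Then for any endomorphism φ of M, the alternating sum Σᵢ (−1)ⁱ tr_e(φᵢ), taken over a lifting {φᵢ} of φ to an e-bounded projective resolution of M, is independent of the choice of lifting and of the choice of e-bounded projective resolution. -/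
/-- The Jacobson radical of Λ, via the classical characterization:
x ∈ J(Λ) iff 1 - yx is invertible for every y. -/
def Jset (Λ : Type*) [Ring Λ] : Set Λ := {x | ∀ y : Λ, IsUnit (1 - y * x)}

/-- A projective resolution of a right Λ-module M by finite direct sums of modules
of the form eΛ with e idempotent. -/
structure StdRes (Λ : Type*) [Ring Λ] (M : Type*) [AddCommGroup M] [Module Λᵐᵒᵖ M] where
  n : ℕ → ℕ
  E : (i : ℕ) → Fin (n i) → Λ
  idem : ∀ i j, IsIdempotentElem (E i j)
  d : (i : ℕ) → (stdProj (E (i+1)) →ₗ[Λᵐᵒᵖ] stdProj (E i))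
  aug : stdProj (E 0) →ₗ[Λᵐᵒᵖ] M
  surj : Function.Surjective aug
  exact0 : LinearMap.ker aug = LinearMap.range (d 0)
  exact : ∀ i, LinearMap.ker (d i) = LinearMap.range (d (i+1))

/-- A projective resolution is e-bounded if e annihilates the tops of all but finitely
many of its terms, i.e. for all large i the top of each summand E i j · Λ is killed by
right multiplication by e (equivalently E i j · Λ · e ⊆ E i j · J). -/
def StdRes.EBounded {Λ : Type*} [Ring Λ] {M : Type*} [AddCommGroup M] [Module Λᵐᵒᵖ M]
    (e : Λ) (R : StdRes Λ M) : Prop :=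
  ∃ N : ℕ, ∀ i ≥ N, ∀ j, ∀ x : Λ, R.E i j * x * e ∈ Jset Λ

/-- A lifting {φᵢ} of an endomorphism φ of M to a projective resolution of M. -/
def StdRes.IsLifting {Λ : Type*} [Ring Λ] {M : Type*} [AddCommGroup M] [Module Λᵐᵒᵖ M]
    (R : StdRes Λ M) (φ : M →ₗ[Λᵐᵒᵖ] M)
    (L : (i : ℕ) → (stdProj (R.E i) →ₗ[Λᵐᵒᵖ] stdProj (R.E i))) : Prop :=
  (∀ x, R.aug (L 0 x) = φ (R.aug x)) ∧
  ∀ i, ∀ x, R.d i (L (i+1) x) = L i (R.d i x)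

/-- The alternating sum Σᵢ (-1)ⁱ tr_e(φᵢ) ∈ HH₀(Λ_e) attached to a lifting {φᵢ}. -/
noncomputable def eTraceSum {Λ : Type*} [Ring Λ] {M : Type*} [AddCommGroup M]
    [Module Λᵐᵒᵖ M] (e : Λ) (R : StdRes Λ M)
    (L : (i : ℕ) → (stdProj (R.E i) →ₗ[Λᵐᵒᵖ] stdProj (R.E i))) : HH0 (corner Λ e) :=
  ∑ᶠ i : ℕ, ((-1 : ℤ)^i) • HH0.map (cornerProj Λ e) (trP (R.idem i) (L i))


/-! ### Auxiliary machinery -/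

section HH0Lemmas
variable {R S : Type*} [Ring R] [Ring S]

lemma HH0.mk_sum {ι : Type*} (s : Finset ι) (f : ι → R) :
    HH0.mk (∑ i ∈ s, f i) = ∑ i ∈ s, HH0.mk (f i) :=
  map_sum (QuotientAddGroup.mk' (commSub R)) f s

lemma HH0.mk_mul_comm (a b : R) : HH0.mk (a * b) = HH0.mk (b * a) := by
  refine QuotientAddGroup.eq.mpr ?_
  have h : -(a*b) + b*a = -(a*b - b*a) := by abel
  rw [h]
  exact neg_mem (AddSubgroup.subset_closure ⟨a, b, rfl⟩)

lemma HH0.map_mk' (f : R →+* S) (a : R) : HH0.map f (HH0.mk a) = HH0.mk (f a) := rfl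
end HH0Lemmas

section StdLemmas
variable {Λ : Type*} [Ring Λ] {r s : ℕ} {E : Fin r → Λ} {F : Fin s → Λ}

lemma stdProj.coord_eq {x : stdProj E} (j : Fin r) :
    E j * (x : Fin r → Λ) j = (x : Fin r → Λ) j := x.2 j

lemma stdProj.coe_smul' (c : Λᵐᵒᵖ) (x : stdProj E) (j : Fin r) :
    ((c • x : stdProj E) : Fin r → Λ) j = (x : Fin r → Λ) j * c.unop := rfl

lemma stdProj.coe_sum' {ι : Type*} (t : Finset ι) (f : ι → stdProj E) (j : Fin r) :
    ((∑ i ∈ t, f i : stdProj E) : Fin r → Λ) j = ∑ i ∈ t, ((f i : stdProj E) : Fin r → Λ) j := by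
  rw [Submodule.coe_sum]; simp

lemma stdProj.decomp (hE : ∀ j, IsIdempotentElem (E j)) (x : stdProj E) :
    x = ∑ j, MulOpposite.op ((x : Fin r → Λ) j) • stdBasis E hE j := by
  ext i
  rw [stdProj.coe_sum']
  rw [Finset.sum_eq_single i]
  · rw [stdProj.coe_smul', MulOpposite.unop_op]
    show ((x : Fin r → Λ) i : Λ) = (if i = i then E i else 0) * (x : Fin r → Λ) i
    rw [if_pos rfl, stdProj.coord_eq]
  · intro b _ hb
    rw [stdProj.coe_smul', MulOpposite.unop_op]
    show ((stdBasis E hE b : Fin r → Λ) i : Λ) * (x : Fin r → Λ) b = 0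
    show (if i = b then E b else 0) * (x : Fin r → Λ) b = 0
    rw [if_neg (Ne.symm hb), zero_mul]
  · intro h; exact absurd (Finset.mem_univ i) h

lemma stdProj.apply_coord (hE : ∀ j, IsIdempotentElem (E j))
    (α : stdProj E →ₗ[Λᵐᵒᵖ] stdProj F) (x : stdProj E) (k : Fin s) :
    ((α x : stdProj F) : Fin s → Λ) k
      = ∑ j, ((α (stdBasis E hE j) : stdProj F) : Fin s → Λ) k * (x : Fin r → Λ) j := by
  conv_lhs => rw [stdProj.decomp hE x, map_sum]
  rw [stdProj.coe_sum']
  refine Finset.sum_congr rfl fun j _ => ?_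
  rw [map_smul, stdProj.coe_smul']
  rfl

/-- Lifting lemma: stdProj is projective. -/
lemma stdProj.lift (hE : ∀ j, IsIdempotentElem (E j))
    {A B : Type*} [AddCommGroup A] [Module Λᵐᵒᵖ A] [AddCommGroup B] [Module Λᵐᵒᵖ B]
    (d : A →ₗ[Λᵐᵒᵖ] B) (u : stdProj E →ₗ[Λᵐᵒᵖ] B)
    (h : ∀ j, ∃ q : A, d q = u (stdBasis E hE j)) :
    ∃ v : stdProj E →ₗ[Λᵐᵒᵖ] A, ∀ x, d (v x) = u x := by
  choose a ha using h
  refine ⟨{ toFun := fun x => ∑ j, MulOpposite.op ((x : Fin r → Λ) j) • a j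
            map_add' := ?_, map_smul' := ?_ }, ?_⟩
  · intro x y
    rw [← Finset.sum_add_distrib]
    refine Finset.sum_congr rfl fun j _ => ?_
    rw [← add_smul, ← MulOpposite.op_add]
    rfl
  · intro c x
    simp only [RingHom.id_apply]
    rw [Finset.smul_sum]
    refine Finset.sum_congr rfl fun j _ => ?_
    rw [stdProj.coe_smul', MulOpposite.op_mul, MulOpposite.op_unop, mul_smul]
  · intro x
    simp only [LinearMap.coe_mk, AddHom.coe_mk, map_sum, map_smul, ha]
    conv_rhs => rw [stdProj.decomp hE x, map_sum]
    refine Finset.sum_congr rfl fun j _ => ?_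
    rw [map_smul]

lemma trP_sub (hE : ∀ j, IsIdempotentElem (E j)) (φ ψ : stdProj E →ₗ[Λᵐᵒᵖ] stdProj E) :
    trP hE (φ - ψ) = trP hE φ - trP hE ψ := by
  unfold trP
  have h : ∀ j : Fin r, (((φ - ψ) (stdBasis E hE j) : stdProj E) : Fin r → Λ) j
      = (φ (stdBasis E hE j) : Fin r → Λ) j - (ψ (stdBasis E hE j) : Fin r → Λ) j :=
    fun j => rfl
  rw [Finset.sum_congr rfl fun j _ => h j, Finset.sum_sub_distrib]
  exact map_sub (QuotientAddGroup.mk' (commSub Λ)) _ _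

lemma trP_add (hE : ∀ j, IsIdempotentElem (E j)) (φ ψ : stdProj E →ₗ[Λᵐᵒᵖ] stdProj E) :
    trP hE (φ + ψ) = trP hE φ + trP hE ψ := by
  unfold trP
  have h : ∀ j : Fin r, (((φ + ψ) (stdBasis E hE j) : stdProj E) : Fin r → Λ) j
      = (φ (stdBasis E hE j) : Fin r → Λ) j + (ψ (stdBasis E hE j) : Fin r → Λ) j :=
    fun j => rfl
  rw [Finset.sum_congr rfl fun j _ => h j, Finset.sum_add_distrib]
  exact map_add (QuotientAddGroup.mk' (commSub Λ)) _ _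

lemma trP_comm (hE : ∀ j, IsIdempotentElem (E j)) (hF : ∀ j, IsIdempotentElem (F j))
    (α : stdProj E →ₗ[Λᵐᵒᵖ] stdProj F) (β : stdProj F →ₗ[Λᵐᵒᵖ] stdProj E) :
    trP hE (β ∘ₗ α) = trP hF (α ∘ₗ β) := by
  unfold trP
  have h1 : ∀ j : Fin r, ((β (α (stdBasis E hE j)) : stdProj E) : Fin r → Λ) j
      = ∑ k, ((β (stdBasis F hF k) : stdProj E) : Fin r → Λ) j
          * ((α (stdBasis E hE j) : stdProj F) : Fin s → Λ) k :=
    fun j => stdProj.apply_coord hF β _ j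
  have h2 : ∀ k : Fin s, ((α (β (stdBasis F hF k)) : stdProj F) : Fin s → Λ) k
      = ∑ j, ((α (stdBasis E hE j) : stdProj F) : Fin s → Λ) k
          * ((β (stdBasis F hF k) : stdProj E) : Fin r → Λ) j :=
    fun k => stdProj.apply_coord hE α _ k
  simp only [LinearMap.comp_apply]
  rw [Finset.sum_congr rfl fun j _ => h1 j, Finset.sum_congr rfl fun k _ => h2 k]
  rw [HH0.mk_sum, HH0.mk_sum]
  simp only [HH0.mk_sum]
  rw [Finset.sum_comm]
  refine Finset.sum_congr rfl fun k _ => Finset.sum_congr rfl fun j _ => ?_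
  exact HH0.mk_mul_comm _ _
end StdLemmas

section CornerLemmas
variable {Λ : Type*} [Ring Λ] (e : Λ)

lemma cornerProj_surjective : Function.Surjective (cornerProj Λ e) := by
  intro y
  induction y using Quotient.ind
  exact ⟨_, rfl⟩

lemma cornerProj_e_eq_one : cornerProj Λ e e = 1 := by
  have h : (1 - e) ∈ TwoSidedIdeal.span {1 - e} := TwoSidedIdeal.subset_span rfl
  have h2 : cornerProj Λ e (1 - e) = cornerProj Λ e 0 :=
    (RingCon.eq _).mpr (((TwoSidedIdeal.span {1-e}).rel_iff _ _).mpr (by simpa using h))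
  rw [map_sub, map_one, map_zero, sub_eq_zero] at h2
  exact h2.symm

lemma Jset_map {u : Λ} (hu : u ∈ Jset Λ) : cornerProj Λ e u ∈ Jset (corner Λ e) := by
  intro y
  obtain ⟨z, rfl⟩ := cornerProj_surjective e y
  rw [← map_one (cornerProj Λ e), ← map_mul, ← map_sub]
  exact (hu z).map (cornerProj Λ e)

lemma idem_Jset_eq_zero {R : Type*} [Ring R] {f : R} (hf : IsIdempotentElem f)
    (hJ : f ∈ Jset R) : f = 0 := by
  obtain ⟨u, hu⟩ := hJ 1
  rw [one_mul] at hu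
  have h0 : f * (1 - f) = 0 := by
    rw [mul_sub, mul_one, hf.eq, sub_self]
  have h1 : f * ((1 - f) * ↑u⁻¹) = 0 := by rw [← mul_assoc, h0, zero_mul]
  have hinv : (1 - f) * ↑u⁻¹ = 1 := by rw [← hu]; exact u.mul_inv
  rw [hinv, mul_one] at h1
  exact h1

lemma corner_idem_vanish {f : Λ} (hf : IsIdempotentElem f)
    (h : ∀ x : Λ, f * x * e ∈ Jset Λ) : cornerProj Λ e f = 0 := by
  have h1 : cornerProj Λ e f = cornerProj Λ e (f * e) := by
    rw [map_mul, cornerProj_e_eq_one, mul_one]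
  have h2 : cornerProj Λ e (f * e) ∈ Jset (corner Λ e) := by
    have hh := h 1
    rw [mul_one] at hh
    exact Jset_map e hh
  refine idem_Jset_eq_zero ?_ (h1 ▸ h2 : cornerProj Λ e f ∈ Jset (corner Λ e))
  show cornerProj Λ e f * cornerProj Λ e f = cornerProj Λ e f
  rw [← map_mul, hf.eq]
end CornerLemmas

section Resolutions
variable {Λ : Type*} [Ring Λ] {M : Type*} [AddCommGroup M] [Module Λᵐᵒᵖ M]

namespace StdRes

lemma aug_d (R : StdRes Λ M) (x : stdProj (R.E 1)) : R.aug (R.d 0 x) = 0 := by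
  have h : R.d 0 x ∈ LinearMap.range (R.d 0) := ⟨x, rfl⟩
  rw [← R.exact0] at h
  exact h

lemma d_d (R : StdRes Λ M) (i : ℕ) (x : stdProj (R.E (i+2))) :
    R.d i (R.d (i+1) x) = 0 := by
  have h : R.d (i+1) x ∈ LinearMap.range (R.d (i+1)) := ⟨x, rfl⟩
  rw [← R.exact i] at h
  exact h

variable (R₁ R₂ : StdRes Λ M)

/-- Base of the comparison chain map. -/
noncomputable def cm0 : Σ' (a : stdProj (R₁.E 0) →ₗ[Λᵐᵒᵖ] stdProj (R₂.E 0)),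
    ∀ x, R₂.aug (a x) = R₁.aug x :=
  ⟨Classical.choose (stdProj.lift (R₁.idem 0) R₂.aug R₁.aug (fun j => R₂.surj _)),
   Classical.choose_spec (stdProj.lift (R₁.idem 0) R₂.aug R₁.aug (fun j => R₂.surj _))⟩

lemma cm1_ex : ∃ v : stdProj (R₁.E 1) →ₗ[Λᵐᵒᵖ] stdProj (R₂.E 1),
    ∀ x, R₂.d 0 (v x) = (cm0 R₁ R₂).1 (R₁.d 0 x) := by
  refine stdProj.lift (R₁.idem 1) (R₂.d 0) ((cm0 R₁ R₂).1 ∘ₗ R₁.d 0) (fun j => ?_)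
  have hmem : ((cm0 R₁ R₂).1 ∘ₗ R₁.d 0) (stdBasis _ (R₁.idem 1) j)
      ∈ LinearMap.range (R₂.d 0) := by
    rw [← R₂.exact0, LinearMap.mem_ker, LinearMap.comp_apply, (cm0 R₁ R₂).2, R₁.aug_d]
  obtain ⟨q, hq⟩ := hmem
  exact ⟨q, hq⟩

lemma cmStep_ex (i : ℕ)
    (a : stdProj (R₁.E i) →ₗ[Λᵐᵒᵖ] stdProj (R₂.E i))
    (b : stdProj (R₁.E (i+1)) →ₗ[Λᵐᵒᵖ] stdProj (R₂.E (i+1)))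
    (hab : ∀ x, R₂.d i (b x) = a (R₁.d i x)) :
    ∃ v : stdProj (R₁.E (i+2)) →ₗ[Λᵐᵒᵖ] stdProj (R₂.E (i+2)),
      ∀ x, R₂.d (i+1) (v x) = (b ∘ₗ R₁.d (i+1)) x := by
  refine stdProj.lift (R₁.idem (i+2)) (R₂.d (i+1)) (b ∘ₗ R₁.d (i+1)) (fun j => ?_)
  have hmem : (b ∘ₗ R₁.d (i+1)) (stdBasis _ (R₁.idem (i+2)) j)
      ∈ LinearMap.range (R₂.d (i+1)) := by
    rw [← R₂.exact i, LinearMap.mem_ker, LinearMap.comp_apply, hab, R₁.d_d, map_zero]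
  obtain ⟨q, hq⟩ := hmem
  exact ⟨q, hq⟩

/-- Comparison chain map construction, carrying two consecutive maps. -/
noncomputable def cmAux : (i : ℕ) →
    Σ' (a : stdProj (R₁.E i) →ₗ[Λᵐᵒᵖ] stdProj (R₂.E i))
      (b : stdProj (R₁.E (i+1)) →ₗ[Λᵐᵒᵖ] stdProj (R₂.E (i+1))),
      ∀ x, R₂.d i (b x) = a (R₁.d i x)
  | 0 => ⟨(cm0 R₁ R₂).1, Classical.choose (cm1_ex R₁ R₂),
          fun x => Classical.choose_spec (cm1_ex R₁ R₂) x⟩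
  | (i+1) => ⟨(cmAux i).2.1,
      Classical.choose (cmStep_ex R₁ R₂ i (cmAux i).1 (cmAux i).2.1 (cmAux i).2.2),
      fun x => Classical.choose_spec
        (cmStep_ex R₁ R₂ i (cmAux i).1 (cmAux i).2.1 (cmAux i).2.2) x⟩

lemma chainmap_exists :
    ∃ f : (i : ℕ) → (stdProj (R₁.E i) →ₗ[Λᵐᵒᵖ] stdProj (R₂.E i)),
      (∀ x, R₂.aug (f 0 x) = R₁.aug x) ∧
      ∀ i, ∀ x, R₂.d i (f (i+1) x) = f i (R₁.d i x) := by
  refine ⟨fun i => (cmAux R₁ R₂ i).1, ?_, ?_⟩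
  · exact (cm0 R₁ R₂).2
  · intro i x
    have hsucc : (cmAux R₁ R₂ (i+1)).1 = (cmAux R₁ R₂ i).2.1 := by
      rw [cmAux]
    show R₂.d i ((cmAux R₁ R₂ (i+1)).1 x) = (cmAux R₁ R₂ i).1 (R₁.d i x)
    rw [hsucc]
    exact (cmAux R₁ R₂ i).2.2 x

end StdRes

section Homotopy
variable (R : StdRes Λ M) (D : (i : ℕ) → (stdProj (R.E i) →ₗ[Λᵐᵒᵖ] stdProj (R.E i)))

lemma ht0_ex (hD0 : ∀ x, R.aug (D 0 x) = 0) : ∃ v : stdProj (R.E 0) →ₗ[Λᵐᵒᵖ] stdProj (R.E 1),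
    ∀ x, R.d 0 (v x) = D 0 x := by
  refine stdProj.lift (R.idem 0) (R.d 0) (D 0) (fun j => ?_)
  have hmem : D 0 (stdBasis _ (R.idem 0) j) ∈ LinearMap.range (R.d 0) := by
    rw [← R.exact0, LinearMap.mem_ker, hD0]
  obtain ⟨q, hq⟩ := hmem
  exact ⟨q, hq⟩

lemma ht1_ex (hD0 : ∀ x, R.aug (D 0 x) = 0)
    (hD : ∀ i x, R.d i (D (i+1) x) = D i (R.d i x)) (a : stdProj (R.E 0) →ₗ[Λᵐᵒᵖ] stdProj (R.E 1))
    (ha : ∀ x, R.d 0 (a x) = D 0 x) :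
    ∃ v : stdProj (R.E 1) →ₗ[Λᵐᵒᵖ] stdProj (R.E 2),
      ∀ x, R.d 1 (v x) = (D 1 - a ∘ₗ R.d 0) x := by
  refine stdProj.lift (R.idem 1) (R.d 1) (D 1 - a ∘ₗ R.d 0) (fun j => ?_)
  have hmem : (D 1 - a ∘ₗ R.d 0) (stdBasis _ (R.idem 1) j)
      ∈ LinearMap.range (R.d 1) := by
    rw [← R.exact 0, LinearMap.mem_ker]
    have : R.d 0 ((D 1 - a ∘ₗ R.d 0) (stdBasis _ (R.idem 1) j))
        = R.d 0 (D 1 (stdBasis _ (R.idem 1) j))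
          - R.d 0 (a (R.d 0 (stdBasis _ (R.idem 1) j))) := by
      rw [LinearMap.sub_apply, map_sub]; rfl
    rw [this, hD 0, ha, sub_self]
  obtain ⟨q, hq⟩ := hmem
  exact ⟨q, hq⟩

lemma htStep_ex (hD : ∀ i x, R.d i (D (i+1) x) = D i (R.d i x)) (i : ℕ)
    (a : stdProj (R.E i) →ₗ[Λᵐᵒᵖ] stdProj (R.E (i+1)))
    (b : stdProj (R.E (i+1)) →ₗ[Λᵐᵒᵖ] stdProj (R.E (i+2)))
    (hab : ∀ x, R.d (i+1) (b x) = D (i+1) x - a (R.d i x)) :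
    ∃ v : stdProj (R.E (i+2)) →ₗ[Λᵐᵒᵖ] stdProj (R.E (i+3)),
      ∀ x, R.d (i+2) (v x) = (D (i+2) - b ∘ₗ R.d (i+1)) x := by
  refine stdProj.lift (R.idem (i+2)) (R.d (i+2)) (D (i+2) - b ∘ₗ R.d (i+1)) (fun j => ?_)
  have hmem : (D (i+2) - b ∘ₗ R.d (i+1)) (stdBasis _ (R.idem (i+2)) j)
      ∈ LinearMap.range (R.d (i+2)) := by
    rw [← R.exact (i+1), LinearMap.mem_ker]
    set y := stdBasis _ (R.idem (i+2)) j
    have h1 : R.d (i+1) ((D (i+2) - b ∘ₗ R.d (i+1)) y)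
        = R.d (i+1) (D (i+2) y) - R.d (i+1) (b (R.d (i+1) y)) := by
      rw [LinearMap.sub_apply, map_sub]; rfl
    rw [h1, hD (i+1), hab, R.d_d, map_zero, sub_zero, sub_self]
  obtain ⟨q, hq⟩ := hmem
  exact ⟨q, hq⟩

/-- Homotopy construction, carrying two consecutive maps. -/
noncomputable def htAux (hD0 : ∀ x, R.aug (D 0 x) = 0)
    (hD : ∀ i x, R.d i (D (i+1) x) = D i (R.d i x)) : (i : ℕ) →
    Σ' (a : stdProj (R.E i) →ₗ[Λᵐᵒᵖ] stdProj (R.E (i+1)))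
      (b : stdProj (R.E (i+1)) →ₗ[Λᵐᵒᵖ] stdProj (R.E (i+2))),
      ∀ x, R.d (i+1) (b x) = D (i+1) x - a (R.d i x)
  | 0 =>
    ⟨Classical.choose (ht0_ex R D hD0),
     Classical.choose (ht1_ex R D hD0 hD _ (Classical.choose_spec (ht0_ex R D hD0))),
     fun x => Classical.choose_spec
       (ht1_ex R D hD0 hD _ (Classical.choose_spec (ht0_ex R D hD0))) x⟩
  | (i+1) => ⟨(htAux hD0 hD i).2.1,
      Classical.choose (htStep_ex R D hD i (htAux hD0 hD i).1 (htAux hD0 hD i).2.1 (htAux hD0 hD i).2.2),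
      fun x => by
        have := Classical.choose_spec
          (htStep_ex R D hD i (htAux hD0 hD i).1 (htAux hD0 hD i).2.1 (htAux hD0 hD i).2.2) x
        rw [this, LinearMap.sub_apply]
        rfl⟩

lemma homotopy_exists (hD0 : ∀ x, R.aug (D 0 x) = 0)
    (hD : ∀ i x, R.d i (D (i+1) x) = D i (R.d i x)) :
    ∃ h : (i : ℕ) → (stdProj (R.E i) →ₗ[Λᵐᵒᵖ] stdProj (R.E (i+1))),
      (∀ x, R.d 0 (h 0 x) = D 0 x) ∧
      ∀ i, ∀ x, R.d (i+1) (h (i+1) x) = D (i+1) x - h i (R.d i x) := by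
  refine ⟨fun i => (htAux R D hD0 hD i).1, ?_, ?_⟩
  · exact Classical.choose_spec (ht0_ex R D hD0)
  · intro i x
    have hsucc : (htAux R D hD0 hD (i+1)).1 = (htAux R D hD0 hD i).2.1 := by
      rw [htAux]
    show R.d (i+1) ((htAux R D hD0 hD (i+1)).1 x)
        = D (i+1) x - (htAux R D hD0 hD i).1 (R.d i x)
    rw [hsucc]
    exact (htAux R D hD0 hD i).2.2 x

end Homotopy

/-- Trace vanishing in the e-bounded range. -/
lemma trace_vanish (e : Λ) (R : StdRes Λ M) {N : ℕ}
    (hN : ∀ i ≥ N, ∀ j, ∀ x : Λ, R.E i j * x * e ∈ Jset Λ) {i : ℕ} (hi : N ≤ i)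
    (ψ : stdProj (R.E i) →ₗ[Λᵐᵒᵖ] stdProj (R.E i)) :
    HH0.map (cornerProj Λ e) (trP (R.idem i) ψ) = 0 := by
  unfold trP
  rw [HH0.map_mk']
  have hz : ∀ j, cornerProj Λ e ((ψ (stdBasis _ (R.idem i) j) : Fin (R.n i) → Λ) j) = 0 := by
    intro j
    have hv := stdProj.coord_eq (x := ψ (stdBasis _ (R.idem i) j)) j
    rw [← hv, map_mul, corner_idem_vanish e (R.idem i j) (fun x => hN i hi j x), zero_mul]
  rw [map_sum, Finset.sum_eq_zero (fun j _ => hz j)]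
  rfl

/-- eTraceSum as a finite sum. -/
lemma eTraceSum_eq_sum (e : Λ) (R : StdRes Λ M)
    (L : (i : ℕ) → (stdProj (R.E i) →ₗ[Λᵐᵒᵖ] stdProj (R.E i))) {N : ℕ}
    (hN : ∀ i ≥ N, ∀ j, ∀ x : Λ, R.E i j * x * e ∈ Jset Λ) :
    eTraceSum e R L = ∑ i ∈ Finset.range (N+1),
      ((-1 : ℤ)^i) • HH0.map (cornerProj Λ e) (trP (R.idem i) (L i)) := by
  refine finsum_eq_sum_of_support_subset _ (fun i hi => ?_)
  simp only [Finset.coe_range, Set.mem_Iio]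
  by_contra hlt
  push_neg at hlt
  have hle : N ≤ i := le_trans (Nat.le_succ N) hlt
  apply hi
  show ((-1 : ℤ)^i) • HH0.map (cornerProj Λ e) (trP (R.idem i) (L i)) = 0
  rw [trace_vanish e R hN hle (L i), smul_zero]

/-- Telescoping lemma. -/
lemma telescope {G : Type*} [AddCommGroup G] (T c : ℕ → G)
    (h0 : T 0 = c 0) (hS : ∀ i, T (i+1) = c (i+1) + c i) (K : ℕ) :
    ∑ i ∈ Finset.range (K+1), ((-1 : ℤ)^i) • T i = ((-1 : ℤ)^K) • c K := by
  induction K with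
  | zero => simpa using h0
  | succ K ih =>
    rw [Finset.sum_range_succ, ih, hS, smul_add]
    have hpow : ((-1 : ℤ)^(K+1)) = -((-1 : ℤ)^K) := by ring
    rw [hpow, neg_smul, neg_smul]
    abel

/-- Homotopy invariance of the e-trace sum. -/
lemma homotopy_inv (e : Λ) (R : StdRes Λ M) {N : ℕ}
    (hN : ∀ i ≥ N, ∀ j, ∀ x : Λ, R.E i j * x * e ∈ Jset Λ)
    (φ : M →ₗ[Λᵐᵒᵖ] M)
    (L L' : (i : ℕ) → (stdProj (R.E i) →ₗ[Λᵐᵒᵖ] stdProj (R.E i)))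
    (hL : R.IsLifting φ L) (hL' : R.IsLifting φ L') :
    eTraceSum e R L = eTraceSum e R L' := by
  set D : (i : ℕ) → (stdProj (R.E i) →ₗ[Λᵐᵒᵖ] stdProj (R.E i)) := fun i => L i - L' i with hD_def
  have hD0 : ∀ x, R.aug (D 0 x) = 0 := by
    intro x
    have : D 0 x = L 0 x - L' 0 x := rfl
    rw [this, map_sub, hL.1 x, hL'.1 x, sub_self]
  have hD : ∀ i x, R.d i (D (i+1) x) = D i (R.d i x) := by
    intro i x
    have h1 : D (i+1) x = L (i+1) x - L' (i+1) x := rfl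
    have h2 : D i (R.d i x) = L i (R.d i x) - L' i (R.d i x) := rfl
    rw [h1, h2, map_sub, hL.2 i x, hL'.2 i x]
  obtain ⟨h, h0, hS⟩ := homotopy_exists R D hD0 hD
  set tre : (i : ℕ) → (stdProj (R.E i) →ₗ[Λᵐᵒᵖ] stdProj (R.E i)) → HH0 (corner Λ e) :=
    fun i ψ => HH0.map (cornerProj Λ e) (trP (R.idem i) ψ) with htre_def
  set c : ℕ → HH0 (corner Λ e) := fun i => tre i (R.d i ∘ₗ h i) with hc_def
  set T : ℕ → HH0 (corner Λ e) := fun i => tre i (D i) with hT_def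
  have hT0 : T 0 = c 0 := by
    have hmap : D 0 = R.d 0 ∘ₗ h 0 := LinearMap.ext fun x => (h0 x).symm
    show tre 0 (D 0) = tre 0 (R.d 0 ∘ₗ h 0)
    rw [hmap]
  have hTS : ∀ i, T (i+1) = c (i+1) + c i := by
    intro i
    have hmap : D (i+1) = (R.d (i+1) ∘ₗ h (i+1)) + (h i ∘ₗ R.d i) := by
      refine LinearMap.ext fun x => ?_
      have := hS i x
      have h2 : ((R.d (i+1) ∘ₗ h (i+1)) + (h i ∘ₗ R.d i)) x
          = R.d (i+1) (h (i+1) x) + h i (R.d i x) := rfl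
      rw [h2, this]
      abel
    show tre (i+1) (D (i+1)) = c (i+1) + c i
    rw [hmap]
    show HH0.map (cornerProj Λ e)
        (trP (R.idem (i+1)) ((R.d (i+1) ∘ₗ h (i+1)) + (h i ∘ₗ R.d i))) = c (i+1) + c i
    rw [trP_add, map_add]
    have hc1 : HH0.map (cornerProj Λ e) (trP (R.idem (i+1)) (R.d (i+1) ∘ₗ h (i+1)))
        = c (i+1) := rfl
    have hc2 : HH0.map (cornerProj Λ e) (trP (R.idem (i+1)) (h i ∘ₗ R.d i)) = c i := by
      rw [trP_comm (R.idem (i+1)) (R.idem i) (R.d i) (h i)]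
    rw [hc1, hc2]
  have key : ∑ i ∈ Finset.range (N+1), ((-1 : ℤ)^i) • T i = ((-1 : ℤ)^N) • c N :=
    telescope T c hT0 hTS N
  have hcN : c N = 0 := trace_vanish e R hN (le_refl N) _
  rw [hcN, smul_zero] at key
  rw [eTraceSum_eq_sum e R L hN, eTraceSum_eq_sum e R L' hN]
  rw [← sub_eq_zero, ← Finset.sum_sub_distrib]
  rw [← key]
  refine Finset.sum_congr rfl fun i _ => ?_
  have hT : T i = HH0.map (cornerProj Λ e) (trP (R.idem i) (L i))
      - HH0.map (cornerProj Λ e) (trP (R.idem i) (L' i)) := by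
    show tre i (D i) = _
    have hD' : D i = L i - L' i := rfl
    rw [hD']
    show HH0.map (cornerProj Λ e) (trP (R.idem i) (L i - L' i)) = _
    rw [trP_sub, map_sub]
  rw [hT]
  exact (smul_sub ((-1 : ℤ)^i)
    (HH0.map (cornerProj Λ e) (trP (R.idem i) (L i)))
    (HH0.map (cornerProj Λ e) (trP (R.idem i) (L' i)))).symm

end Resolutions

/-- Lemma 1.3: over an artin algebra Λ, for a finitely generated right Λ-module M with an
e-bounded projective resolution and an endomorphism φ of M, the alternating sum
Σᵢ (-1)ⁱ tr_e(φᵢ) over a lifting {φᵢ} of φ is independent of the choice of the lifting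
and of the choice of the e-bounded projective resolution. -/
theorem etrace_well_defined (k : Type*) [CommRing k] [IsArtinianRing k]
    (Λ : Type*) [Ring Λ] [Algebra k Λ] [Module.Finite k Λ]
    (e : Λ) (he : IsIdempotentElem e)
    (M : Type*) [AddCommGroup M] [Module Λᵐᵒᵖ M] [Module.Finite Λᵐᵒᵖ M]
    (φ : M →ₗ[Λᵐᵒᵖ] M)
    (R₁ R₂ : StdRes Λ M) (hR₁ : R₁.EBounded e) (hR₂ : R₂.EBounded e)
    (L₁ : (i : ℕ) → (stdProj (R₁.E i) →ₗ[Λᵐᵒᵖ] stdProj (R₁.E i)))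
    (L₂ : (i : ℕ) → (stdProj (R₂.E i) →ₗ[Λᵐᵒᵖ] stdProj (R₂.E i)))
    (hL₁ : R₁.IsLifting φ L₁) (hL₂ : R₂.IsLifting φ L₂) :
    eTraceSum e R₁ L₁ = eTraceSum e R₂ L₂ := by
  obtain ⟨N₁, hN₁⟩ := hR₁
  obtain ⟨N₂, hN₂⟩ := hR₂
  obtain ⟨f, hf0, hfd⟩ := StdRes.chainmap_exists R₁ R₂
  obtain ⟨g, hg0, hgd⟩ := StdRes.chainmap_exists R₂ R₁
  have hL₃ : R₁.IsLifting φ (fun i => g i ∘ₗ (L₂ i ∘ₗ f i)) := by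
    refine ⟨fun x => ?_, fun i x => ?_⟩
    · show R₁.aug (g 0 (L₂ 0 (f 0 x))) = φ (R₁.aug x)
      rw [hg0, hL₂.1, hf0]
    · show R₁.d i (g (i+1) (L₂ (i+1) (f (i+1) x))) = g i (L₂ i (f i (R₁.d i x)))
      rw [hgd, hL₂.2, hfd]
  have hL₄ : R₂.IsLifting φ (fun i => f i ∘ₗ (g i ∘ₗ L₂ i)) := by
    refine ⟨fun x => ?_, fun i x => ?_⟩
    · show R₂.aug (f 0 (g 0 (L₂ 0 x))) = φ (R₂.aug x)
      rw [hf0, hg0, hL₂.1]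
    · show R₂.d i (f (i+1) (g (i+1) (L₂ (i+1) x))) = f i (g i (L₂ i (R₂.d i x)))
      rw [hfd, hgd, hL₂.2]
  have e1 := homotopy_inv e R₁ hN₁ φ L₁ (fun i => g i ∘ₗ (L₂ i ∘ₗ f i)) hL₁ hL₃
  have e3 := homotopy_inv e R₂ hN₂ φ (fun i => f i ∘ₗ (g i ∘ₗ L₂ i)) L₂ hL₄ hL₂
  have e2 : eTraceSum e R₁ (fun i => g i ∘ₗ (L₂ i ∘ₗ f i))
      = eTraceSum e R₂ (fun i => f i ∘ₗ (g i ∘ₗ L₂ i)) := by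
    unfold eTraceSum
    apply finsum_congr
    intro i
    have htr : trP (R₁.idem i) (g i ∘ₗ (L₂ i ∘ₗ f i)) = trP (R₂.idem i) (f i ∘ₗ (g i ∘ₗ L₂ i)) := by
      rw [← LinearMap.comp_assoc]
      exact trP_comm (R₁.idem i) (R₂.idem i) (f i) (g i ∘ₗ L₂ i)
    show ((-1 : ℤ)^i) • HH0.map (cornerProj Λ e) (trP (R₁.idem i) (g i ∘ₗ (L₂ i ∘ₗ f i)))
        = ((-1 : ℤ)^i) • HH0.map (cornerProj Λ e) (trP (R₂.idem i) (f i ∘ₗ (g i ∘ₗ L₂ i)))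
    rw [htr]
  rw [e1, e2, e3]
end
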